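/- Let k be a commutative ring, G a group, A a k-algebra, and 𝒜 : G → Submodule k A a G-grading of A. Then the map ρ_𝒜 : A → A ⊗[k] MonoidAlgebra k G defined by ρ_𝒜(a) = Σ_{g ∈ G} (the 𝒜 g-component of a) ⊗ₜ single g 1 is a k-algebra homomorphism, and it is counital and coassociative; i.e. ρ_𝒜 is a comodule-algebra structure on A over MonoidAlgebra k G. -/

import Mathlib

/-!
A grading identifies `A` with the algebra `⨁ g, 𝒜 g`, and `ρ_𝒜` is the algebra map out of
this direct sum sending `x ∈ 𝒜 g` to `x ⊗ₜ g`: it is multiplicative because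
`𝒜 g * 𝒜 h ⊆ 𝒜 (g * h)` and `g * h` is the product in `k[G]`. Counitality and coassociativity
are identities between linear maps, so it suffices to check them on homogeneous elements,
where they reduce to `ε g = 1` and `Δ g = g ⊗ₜ g`.
-/

open TensorProduct

noncomputable section

variable (k G A : Type*) [CommRing k] [Group G] [DecidableEq G] [Ring A] [Algebra k A]

/-- The counit of the standard bialgebra structure on the group algebra `k[G]`:
it is the `k`-linear map with `counit (single g r) = r`; in particular
`counit (single g 1) = 1`, so that every group element is grouplike. -/
def gaCounit : MonoidAlgebra k G →ₗ[k] k :=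
  (Finsupp.lsum k fun _ => LinearMap.id) ∘ₗ (MonoidAlgebra.coeffLinearEquiv k).toLinearMap

/-- The comultiplication of the standard bialgebra structure on the group algebra `k[G]`:
it is the `k`-linear map with `comul (single g r) = r • (single g 1 ⊗ₜ single g 1)`;
in particular `comul (single g 1) = single g 1 ⊗ₜ single g 1`, so that every group
element is grouplike. -/
def gaComul : MonoidAlgebra k G →ₗ[k] MonoidAlgebra k G ⊗[k] MonoidAlgebra k G :=
  (Finsupp.lsum k fun g =>
    LinearMap.toSpanSingleton k _ (MonoidAlgebra.single g (1 : k) ⊗ₜ[k] MonoidAlgebra.single g (1 : k)))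
      ∘ₗ (MonoidAlgebra.coeffLinearEquiv k).toLinearMap

/-- A `G`-grading of the `k`-algebra `A`: a family `𝒜 : G → Submodule k A` forming an
internal direct sum decomposition of `A` with `1 ∈ 𝒜 1` and `𝒜 g * 𝒜 h ⊆ 𝒜 (g * h)`. -/
structure GroupGrading where
  grading : G → Submodule k A
  decomposition : DirectSum.Decomposition grading
  one_mem : (1 : A) ∈ grading 1
  mul_mem : ∀ {g h : G} {x y : A}, x ∈ grading g → y ∈ grading h → x * y ∈ grading (g * h)

/-- The map `ρ_𝒜 : A → A ⊗[k] k[G]` associated to a grading `𝒜`, defined by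
`ρ_𝒜 a = Σ_{g ∈ G} (the 𝒜 g-component of a) ⊗ₜ single g 1`. -/
def rhoOf (𝒜 : GroupGrading k G A) : A → A ⊗[k] MonoidAlgebra k G :=
  letI := 𝒜.decomposition
  fun a => ∑ᶠ g : G, ((DirectSum.decompose 𝒜.grading a) g : A) ⊗ₜ[k] MonoidAlgebra.single g 1

end

@[simp]
theorem gaCounit_single {k G : Type*} [CommRing k] (g : G) (r : k) :
    gaCounit k G (MonoidAlgebra.single g r) = r := by
  simp [gaCounit]

@[simp]
theorem gaComul_single_one {k G : Type*} [CommRing k] (g : G) :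
    gaComul k G (MonoidAlgebra.single g 1)
      = MonoidAlgebra.single g 1 ⊗ₜ[k] MonoidAlgebra.single g 1 := by
  simp [gaComul]

noncomputable section

namespace GroupGrading

open DirectSum

variable {k G A : Type*} [CommRing k] [Group G] [DecidableEq G] [Ring A] [Algebra k A]
  (𝒜 : GroupGrading k G A)

theorem linearMap_ext {M : Type*} [AddCommMonoid M] [Module k M] {f f' : A →ₗ[k] M}
    (h : ∀ g, ∀ x ∈ 𝒜.grading g, f x = f' x) : f = f' := by
  let := 𝒜.decomposition
  ext a
  induction a using DirectSum.Decomposition.inductionOn 𝒜.grading with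
  | zero => simp only [map_zero]
  | homogeneous x => exact h _ x x.2
  | add a b ha hb => rw [map_add, map_add, ha, hb]

/-- Mathlib's graded algebras are indexed by additive monoids. -/
def addGrading : Additive G → Submodule k A := fun g => 𝒜.grading g.toMul

instance : GradedAlgebra 𝒜.addGrading :=
  { 𝒜.decomposition with
    one_mem := 𝒜.one_mem
    mul_mem := fun _ _ _ _ hx hy => 𝒜.mul_mem hx hy }

def tmulSingle : (⨁ g, 𝒜.addGrading g) →ₐ[k] A ⊗[k] MonoidAlgebra k G :=
  toAlgebra k _
    (fun g => (TensorProduct.mk k A (MonoidAlgebra k G)).flip (MonoidAlgebra.single g.toMul 1)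
      ∘ₗ (𝒜.addGrading g).subtype)
    (by
      change (1 : A) ⊗ₜ[k] MonoidAlgebra.single (1 : G) (1 : k) = 1
      rw [← MonoidAlgebra.one_def, ← Algebra.TensorProduct.one_def])
    (fun _ _ => by
      simp only [LinearMap.comp_apply, Submodule.subtype_apply, LinearMap.flip_apply,
        TensorProduct.mk_apply, Algebra.TensorProduct.tmul_mul_tmul,
        MonoidAlgebra.single_mul_single, one_mul]
      rfl)

def rhoAlgHom : A →ₐ[k] A ⊗[k] MonoidAlgebra k G :=
  𝒜.tmulSingle.comp (decomposeAlgEquiv 𝒜.addGrading : A →ₐ[k] ⨁ g, 𝒜.addGrading g)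

theorem rhoAlgHom_of_mem {g : G} {x : A} (hx : x ∈ 𝒜.grading g) :
    𝒜.rhoAlgHom x = x ⊗ₜ[k] MonoidAlgebra.single g 1 := by
  have hdec : decompose 𝒜.addGrading x = of _ (Additive.ofMul g) ⟨x, hx⟩ :=
    decompose_coe 𝒜.addGrading (⟨x, hx⟩ : 𝒜.addGrading (Additive.ofMul g))
  change 𝒜.tmulSingle (decompose 𝒜.addGrading x) = _
  rw [hdec]
  simp only [tmulSingle, toAlgebra_apply]
  exact toSemiring_of _ _ _ _ _

theorem rhoAlgHom_apply (a : A) : 𝒜.rhoAlgHom a = rhoOf k G A 𝒜 a := by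
  classical
  let := 𝒜.decomposition
  let f g := (decompose 𝒜.grading a g : A) ⊗ₜ[k] MonoidAlgebra.single g (1 : k)
  have hsupp : Function.support f ⊆ (decompose 𝒜.grading a).support := fun g hg => by
    contrapose! hg
    simp [f, DFinsupp.notMem_support_iff.mp hg]
  calc 𝒜.rhoAlgHom a
      = ∑ g ∈ (decompose 𝒜.grading a).support, 𝒜.rhoAlgHom (decompose 𝒜.grading a g) := by
        rw [← map_sum, sum_support_decompose]
    _ = ∑ g ∈ (decompose 𝒜.grading a).support, f g :=
        Finset.sum_congr rfl fun g _ => 𝒜.rhoAlgHom_of_mem (decompose 𝒜.grading a g).2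
    _ = rhoOf k G A 𝒜 a := (finsum_eq_sum_of_support_subset f hsupp).symm

theorem rhoAlgHom_counital :
    TensorProduct.map LinearMap.id (gaCounit k G) ∘ₗ 𝒜.rhoAlgHom.toLinearMap
      = (TensorProduct.rid k A).symm.toLinearMap :=
  𝒜.linearMap_ext fun _ _ hx => by simp [𝒜.rhoAlgHom_of_mem hx]

theorem rhoAlgHom_coassoc :
    TensorProduct.map 𝒜.rhoAlgHom.toLinearMap LinearMap.id ∘ₗ 𝒜.rhoAlgHom.toLinearMap
      = (TensorProduct.assoc k A (MonoidAlgebra k G) (MonoidAlgebra k G)).symm.toLinearMap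
          ∘ₗ TensorProduct.map LinearMap.id (gaComul k G) ∘ₗ 𝒜.rhoAlgHom.toLinearMap :=
  𝒜.linearMap_ext fun _ _ hx => by simp [𝒜.rhoAlgHom_of_mem hx]

end GroupGrading

end

/-- For a `G`-grading `𝒜` of `A`, the map `ρ_𝒜` is a `k`-algebra homomorphism which is
counital and coassociative, i.e. a comodule-algebra structure on `A` over `k[G]`. -/
theorem rho_isComoduleAlgebra
    (k G A : Type*) [CommRing k] [Group G] [DecidableEq G] [Ring A] [Algebra k A]
    (𝒜 : GroupGrading k G A) :
    ∃ ρ : A →ₐ[k] A ⊗[k] MonoidAlgebra k G,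
      (⇑ρ = rhoOf k G A 𝒜) ∧
      (TensorProduct.map LinearMap.id (gaCounit k G) ∘ₗ ρ.toLinearMap
        = (TensorProduct.rid k A).symm.toLinearMap) ∧
      (TensorProduct.map ρ.toLinearMap LinearMap.id ∘ₗ ρ.toLinearMap
        = (TensorProduct.assoc k A (MonoidAlgebra k G) (MonoidAlgebra k G)).symm.toLinearMap
            ∘ₗ TensorProduct.map LinearMap.id (gaComul k G) ∘ₗ ρ.toLinearMap) :=
  ⟨𝒜.rhoAlgHom, funext 𝒜.rhoAlgHom_apply, 𝒜.rhoAlgHom_counital, 𝒜.rhoAlgHom_coassoc⟩
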